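/- Let $\theta, \alpha, \theta_0, \alpha_0 \in \mathbb{R}$ with $\theta \neq \alpha$, let $(Z_j)_{j \geq -2}$ be a real sequence (with $Z_{-2} = 0$), and define $X_j = Z_j - (\theta_0 + \alpha_0) Z_{j-1} + \theta_0 \alpha_0 Z_{j-2}$ for $j \geq 1$, and $Y_0 = Z_0 - \alpha_0 Z_{-1}$. Then for every $i \geq 1$ the reconstructed innovation $z_i = \sum_{j=1}^i \frac{\theta^{i-j+1}-\alpha^{i-j+1}}{\theta-\alpha} X_j + \frac{\theta^{i+1}-\alpha^{i+1}}{\theta-\alpha} Y_0 + \alpha^{i+1} Z_{-1}$ satisfies $z_i = Z_i - r_i$, where $r_i = \frac{(\theta_0-\theta)(\theta-\alpha_0)}{\theta-\alpha}\sum_{j=-1}^{i-1}\theta^{i-j-1} Z_j + \frac{(\alpha_0-\alpha)(\theta_0-\alpha)}{\theta-\alpha}\sum_{j=-1}^{i-1}\alpha^{i-j-1} Z_j - (\theta_0-\theta)\frac{\theta^{i+1}-\alpha^{i+1}}{\theta-\alpha} Z_{-1}$. -/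
import Mathlib

private lemma ma2_aux (t θ₀ α₀ : ℝ) (Z X : ℕ → ℝ)
    (hX : ∀ j : ℕ, 1 ≤ j → X j = Z (j + 2) - (θ₀ + α₀) * Z (j + 1) + θ₀ * α₀ * Z j) :
    ∀ i : ℕ, 1 ≤ i →
      (∑ j ∈ Finset.Icc 1 i, t ^ (i - j + 1) * X j) =
        t * Z (i + 2) + (t - θ₀) * (t - α₀) * ∑ j ∈ Finset.Icc 1 (i + 1), t ^ (i + 1 - j) * Z j
          + t ^ (i + 1) * ((θ₀ + α₀ - t) * Z 1 - Z 2) - θ₀ * α₀ * Z (i + 1) := by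
  intro i hi
  induction i, hi using Nat.le_induction with
  | base =>
      simp only [Finset.Icc_self, Finset.sum_singleton, show (1:ℕ)+1 = 2 from rfl]
      rw [show Finset.Icc 1 2 = {1, 2} from rfl]
      rw [Finset.sum_insert (by decide), Finset.sum_singleton, hX 1 le_rfl]
      norm_num; ring
  | succ i hi ih =>
      have h1 : ∑ j ∈ Finset.Icc 1 (i + 1), t ^ (i + 1 - j + 1) * X j
          = (∑ j ∈ Finset.Icc 1 i, t ^ (i + 1 - j + 1) * X j) + t * X (i + 1) := by
        rw [Finset.sum_Icc_succ_top (by omega)]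
        congr 1
        norm_num
      have h2 : ∑ j ∈ Finset.Icc 1 i, t ^ (i + 1 - j + 1) * X j
          = t * ∑ j ∈ Finset.Icc 1 i, t ^ (i - j + 1) * X j := by
        rw [Finset.mul_sum]
        refine Finset.sum_congr rfl fun j hj => ?_
        have hji : j ≤ i := (Finset.mem_Icc.mp hj).2
        rw [show i + 1 - j + 1 = (i - j + 1) + 1 by omega, pow_succ]
        ring
      have h3 : ∑ j ∈ Finset.Icc 1 (i + 1 + 1), t ^ (i + 1 + 1 - j) * Z j
          = t * (∑ j ∈ Finset.Icc 1 (i + 1), t ^ (i + 1 - j) * Z j) + Z (i + 2) := by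
        rw [Finset.sum_Icc_succ_top (by omega), Finset.mul_sum]
        congr 1
        · refine Finset.sum_congr rfl fun j hj => ?_
          have hji : j ≤ i + 1 := (Finset.mem_Icc.mp hj).2
          rw [show i + 1 + 1 - j = (i + 1 - j) + 1 by omega, pow_succ]
          ring
        · norm_num
      rw [h1, h2, ih, h3, hX (i + 1) (by omega)]
      have hp : t ^ (i + 1 + 1) = t ^ (i + 1) * t := by rw [pow_succ]
      rw [show i + 1 + 2 = i + 3 by omega, show i + 1 + 1 = i + 2 by omega] at *
      rw [show t ^ (i + 2) = t ^ (i + 1) * t by rw [pow_succ]]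
      ring

/-- Residual identity for the MA(2) model `X_t = (1-θ₀B)(1-α₀B)Z_t`.
Indices are shifted by 2: `Z n` here stands for `Z_{n-2}` of the paper, so
`Z 0 = Z_{-2} = 0`, `Z 1 = Z_{-1}`, and `X j = Z_j - (θ₀+α₀)Z_{j-1} + θ₀α₀Z_{j-2}`.
With `Y₀ = Z_0 - α₀ Z_{-1}`, the reconstructed innovation
`z_i = ∑_{j=1}^i ((θ^{i-j+1}-α^{i-j+1})/(θ-α)) X_j + ((θ^{i+1}-α^{i+1})/(θ-α)) Y₀ + α^{i+1} Z_{-1}`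
satisfies `z_i = Z_i - r_i` with
`r_i = ((θ₀-θ)(θ-α₀)/(θ-α)) ∑_{j=-1}^{i-1} θ^{i-j-1} Z_j
     + ((α₀-α)(θ₀-α)/(θ-α)) ∑_{j=-1}^{i-1} α^{i-j-1} Z_j
     - (θ₀-θ)((θ^{i+1}-α^{i+1})/(θ-α)) Z_{-1}`. -/
theorem ma2_residual_identity (θ α θ₀ α₀ : ℝ) (hne : θ ≠ α)
    (Z : ℕ → ℝ) (hZ : Z 0 = 0)
    (X : ℕ → ℝ)
    (hX : ∀ j : ℕ, 1 ≤ j → X j = Z (j + 2) - (θ₀ + α₀) * Z (j + 1) + θ₀ * α₀ * Z j)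
    (Y₀ : ℝ) (hY₀ : Y₀ = Z 2 - α₀ * Z 1) :
    ∀ i : ℕ, 1 ≤ i →
      (∑ j ∈ Finset.Icc 1 i, (θ ^ (i - j + 1) - α ^ (i - j + 1)) / (θ - α) * X j)
          + (θ ^ (i + 1) - α ^ (i + 1)) / (θ - α) * Y₀ + α ^ (i + 1) * Z 1 =
        Z (i + 2) -
          ((θ₀ - θ) * (θ - α₀) / (θ - α) *
              ∑ j ∈ Finset.Icc 1 (i + 1), θ ^ (i + 1 - j) * Z j
            + (α₀ - α) * (θ₀ - α) / (θ - α) *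
              ∑ j ∈ Finset.Icc 1 (i + 1), α ^ (i + 1 - j) * Z j
            - (θ₀ - θ) * ((θ ^ (i + 1) - α ^ (i + 1)) / (θ - α)) * Z 1) := by
  intro i hi
  have hθα : θ - α ≠ 0 := sub_ne_zero.mpr hne
  have hsum : (∑ j ∈ Finset.Icc 1 i, (θ ^ (i - j + 1) - α ^ (i - j + 1)) / (θ - α) * X j)
      = ((∑ j ∈ Finset.Icc 1 i, θ ^ (i - j + 1) * X j)
          - ∑ j ∈ Finset.Icc 1 i, α ^ (i - j + 1) * X j) / (θ - α) := by
    rw [← Finset.sum_sub_distrib, Finset.sum_div]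
    exact Finset.sum_congr rfl fun j _ => by ring
  rw [hsum, ma2_aux θ θ₀ α₀ Z X hX i hi, ma2_aux α θ₀ α₀ Z X hX i hi, hY₀]
  field_simp
  ring
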